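/- arXiv:0904.2310 — 5 statements merged into one kernel-verified Lean document; each statement's English description precedes it below -/
import Mathlib

section
/- Let Q be a finite set with demands d_i ∈ (0,1] for each i ∈ Q. If Σ_{i∈Q} d_i ≤ 1, then Σ_{i∈Q} s(d_i) ≤ 0.692. -/
/-- For `x ∈ (0,1]`, with `k = ⌊1/x⌋`, the slack is `s(x) = 1/(k(k+1))`. -/
noncomputable def slack (x : ℝ) : ℝ :=
  1 / ((⌊1 / x⌋₊ : ℝ) * ((⌊1 / x⌋₊ : ℝ) + 1))

/-!
Along the Sylvester sequence `1, 2, 6, 42, …` (`m ↦ m (m + 1)`): if the demands total at most `1/m`,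
either all of them are at most `1/(m+1)`, and then each slack is at most `d/(m+1)`, or one demand
lies in `(1/(m+1), 1/m]`, has slack at most `1/(m(m+1))`, and leaves at most
`1/m - 1/(m+1) = 1/(m(m+1))` for the others. Three such steps and the bound `s(d) ≤ d/42` give
`1/2 + 1/6 + 1/42 + 1/42² < 0.692`.
-/

lemma slack_le_div_floor {x : ℝ} (hx : 0 < x) : slack x ≤ x / ⌊1 / x⌋₊ := by
  set k := ⌊1 / x⌋₊ with hk
  rcases Nat.eq_zero_or_pos k with h0 | hpos
  · rw [slack, ← hk, h0]
    simp
  have hkpos : (0 : ℝ) < k := by exact_mod_cast hpos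
  have hlt : 1 / ((k : ℝ) + 1) < x := by
    rw [div_lt_iff₀ (by positivity), ← div_lt_iff₀' hx]
    exact Nat.lt_floor_add_one _
  calc slack x = 1 / ((k : ℝ) + 1) / k := by rw [slack, ← hk, div_div, mul_comm]
    _ ≤ x / k := by gcongr

lemma le_floor_one_div {x : ℝ} {m : ℕ} (hx : 0 < x) (hm : 0 < m) (h : x ≤ 1 / m) :
    m ≤ ⌊1 / x⌋₊ :=
  Nat.le_floor <| (le_one_div hx (by exact_mod_cast hm)).mp h

lemma slack_le_of_le_one_div {x : ℝ} {m : ℕ} (hx : 0 < x) (hm : 0 < m) (h : x ≤ 1 / m) :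
    slack x ≤ 1 / ((m : ℝ) * (m + 1)) := by
  have hk : (m : ℝ) ≤ ⌊1 / x⌋₊ := by exact_mod_cast le_floor_one_div hx hm h
  have hm' : (0 : ℝ) < m := by exact_mod_cast hm
  rw [slack]
  gcongr

lemma slack_le_div_of_le_one_div {x : ℝ} {m : ℕ} (hx : 0 < x) (hm : 0 < m) (h : x ≤ 1 / m) :
    slack x ≤ x / m :=
  (slack_le_div_floor hx).trans <|
    div_le_div_of_nonneg_left hx.le (by exact_mod_cast hm)
      (by exact_mod_cast le_floor_one_div hx hm h)

lemma sum_slack_le_sum_div {ι : Type*} {Q : Finset ι} {d : ι → ℝ} {m : ℕ} (hm : 0 < m)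
    (hpos : ∀ i ∈ Q, 0 < d i) (hle : ∀ i ∈ Q, d i ≤ 1 / m) :
    ∑ i ∈ Q, slack (d i) ≤ (∑ i ∈ Q, d i) / m := by
  rw [Finset.sum_div]
  exact Finset.sum_le_sum fun i hi => slack_le_div_of_le_one_div (hpos i hi) hm (hle i hi)

noncomputable def slackBound : ℕ → ℕ → ℝ
  | m, 0 => 1 / (m : ℝ) ^ 2
  | m, n + 1 => 1 / ((m : ℝ) * (m + 1)) + slackBound (m * (m + 1)) n

lemma slackBound_nonneg (m n : ℕ) : 0 ≤ slackBound m n := by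
  induction n generalizing m with
  | zero => simp only [slackBound]; positivity
  | succ n ih => simp only [slackBound]; have := ih (m * (m + 1)); positivity

lemma sum_slack_le_slackBound {ι : Type*} (n m : ℕ) (hm : 0 < m) (Q : Finset ι) (d : ι → ℝ)
    (hpos : ∀ i ∈ Q, 0 < d i) (hsum : ∑ i ∈ Q, d i ≤ 1 / m) :
    ∑ i ∈ Q, slack (d i) ≤ slackBound m n := by
  classical
  induction n generalizing m Q with
  | zero =>
    have hle : ∀ i ∈ Q, d i ≤ 1 / m := fun i hi =>
      (Finset.single_le_sum (fun j hj => (hpos j hj).le) hi).trans hsum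
    calc ∑ i ∈ Q, slack (d i) ≤ (∑ i ∈ Q, d i) / m := sum_slack_le_sum_div hm hpos hle
      _ ≤ 1 / m / m := by gcongr
      _ = slackBound m 0 := by rw [slackBound, div_div, sq]
  | succ n ih =>
    have hm' : (0 : ℝ) < m := by exact_mod_cast hm
    rw [slackBound]
    by_cases hsmall : ∀ i ∈ Q, d i ≤ 1 / ((m + 1 : ℕ) : ℝ)
    · have := slackBound_nonneg (m * (m + 1)) n
      calc ∑ i ∈ Q, slack (d i) ≤ (∑ i ∈ Q, d i) / ((m + 1 : ℕ) : ℝ) :=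
            sum_slack_le_sum_div m.succ_pos hpos hsmall
        _ ≤ 1 / m / (m + 1) := by push_cast; gcongr
        _ ≤ _ := by rw [div_div]; linarith
    push Not at hsmall
    obtain ⟨j, hjQ, hj⟩ := hsmall
    have hj_le : d j ≤ 1 / m :=
      (Finset.single_le_sum (fun i hi => (hpos i hi).le) hjQ).trans hsum
    rw [← Finset.add_sum_erase Q _ hjQ] at hsum ⊢
    have hrest : ∑ i ∈ Q.erase j, d i ≤ 1 / ((m * (m + 1) : ℕ) : ℝ) := by
      have hgap : 1 / (m : ℝ) - 1 / (m + 1) = 1 / (m * (m + 1)) := by field_simp; ring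
      push_cast at hj ⊢
      linarith
    gcongr
    · exact slack_le_of_le_one_div (hpos j hjQ) hm hj_le
    · exact ih (m * (m + 1)) (by positivity) (Q.erase j)
        (fun i hi => hpos i (Finset.mem_of_mem_erase hi)) hrest

/-- If a finite set of demands in `(0,1]` has total demand at most `1`,
then the total slack is at most `0.692`. -/
theorem slack_sum_le {ι : Type*} (Q : Finset ι) (d : ι → ℝ)
    (hd : ∀ i ∈ Q, 0 < d i ∧ d i ≤ 1)
    (hsum : ∑ i ∈ Q, d i ≤ 1) :
    ∑ i ∈ Q, slack (d i) ≤ 0.692 := by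
  have hsum₁ : ∑ i ∈ Q, d i ≤ 1 / ((1 : ℕ) : ℝ) := by simpa using hsum
  calc ∑ i ∈ Q, slack (d i) ≤ slackBound 1 3 :=
        sum_slack_le_slackBound 3 1 one_pos Q d (fun i hi => (hd i hi).1) hsum₁
    _ ≤ 0.692 := by norm_num [slackBound]
end

section
/- Let λ ≥ 2 be an integer and let Q be a finite set with demands d_i satisfying 1/(λ+1) < d_i ≤ 1 for every i ∈ Q. If Σ_{i∈Q} d_i > (λ−1)/λ, then Σ_{i∈Q} s(d_i) > (λ−1)/(λ(λ+1)). -/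
lemma floor_inv_le_of_inv_succ_lt {x : ℝ} {n : ℕ} (hx : 1 / ((n : ℝ) + 1) < x) :
    ⌊1 / x⌋₊ ≤ n := by
  have hx0 : 0 < x := lt_trans (by positivity) hx
  have h : 1 / x < n + 1 := (one_div_lt hx0 (by positivity)).mpr hx
  exact Nat.lt_succ_iff.mp ((Nat.floor_lt (by positivity)).mpr (by exact_mod_cast h))

lemma div_floor_inv_add_one_le_slack {x : ℝ} (hx0 : 0 < x) (hx1 : x ≤ 1) :
    x / ((⌊1 / x⌋₊ : ℝ) + 1) ≤ slack x := by
  set k := ⌊1 / x⌋₊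
  have hk : (1 : ℝ) ≤ k := by
    exact_mod_cast Nat.le_floor (by rw [Nat.cast_one, le_div_iff₀ hx0]; linarith)
  have hxk : x * k ≤ 1 := (le_div_iff₀' hx0).mp (Nat.floor_le (by positivity))
  calc x / ((k : ℝ) + 1) = x * k / (k * (k + 1)) := by field_simp
    _ ≤ 1 / (k * (k + 1)) := by gcongr
    _ = slack x := rfl

lemma div_succ_le_slack {x : ℝ} {n : ℕ} (hx : 1 / ((n : ℝ) + 1) < x) (hx1 : x ≤ 1) :
    x / ((n : ℝ) + 1) ≤ slack x := by
  have hx0 : 0 < x := lt_trans (by positivity) hx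
  calc x / ((n : ℝ) + 1) ≤ x / ((⌊1 / x⌋₊ : ℝ) + 1) := by
        gcongr; exact_mod_cast floor_inv_le_of_inv_succ_lt hx
    _ ≤ slack x := div_floor_inv_add_one_le_slack hx0 hx1

theorem slack_sum_gt_general {ι : Type*} (lam : ℕ)
    (Q : Finset ι) (d : ι → ℝ)
    (hd : ∀ i ∈ Q, 1 / ((lam : ℝ) + 1) < d i ∧ d i ≤ 1)
    (hsum : ((lam : ℝ) - 1) / (lam : ℝ) < ∑ i ∈ Q, d i) :
    ((lam : ℝ) - 1) / ((lam : ℝ) * ((lam : ℝ) + 1)) < ∑ i ∈ Q, slack (d i) := by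
  calc ((lam : ℝ) - 1) / ((lam : ℝ) * ((lam : ℝ) + 1))
        = ((lam : ℝ) - 1) / lam / (lam + 1) := (div_div _ _ _).symm
    _ < (∑ i ∈ Q, d i) / (lam + 1) := by gcongr
    _ = ∑ i ∈ Q, d i / (lam + 1) := Finset.sum_div _ _ _
    _ ≤ ∑ i ∈ Q, slack (d i) :=
        Finset.sum_le_sum fun i hi => div_succ_le_slack (hd i hi).1 (hd i hi).2

/-- If all demands of a finite set exceed `1/(λ+1)` (and are at most `1`), and the total
demand exceeds `(λ-1)/λ`, then the total slack exceeds `(λ-1)/(λ(λ+1))`. -/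
theorem slack_sum_gt {ι : Type*} (lam : ℕ) (hlam : 2 ≤ lam)
    (Q : Finset ι) (d : ι → ℝ)
    (hd : ∀ i ∈ Q, 1 / ((lam : ℝ) + 1) < d i ∧ d i ≤ 1)
    (hsum : ((lam : ℝ) - 1) / (lam : ℝ) < ∑ i ∈ Q, d i) :
    ((lam : ℝ) - 1) / ((lam : ℝ) * ((lam : ℝ) + 1)) < ∑ i ∈ Q, slack (d i) :=
  slack_sum_gt_general lam Q d hd hsum
end

section
/- Let A = R(r, α) be a nonempty antenna set, let i = min A and j = max A, and suppose i < j. Then r_i ≤ 1/(θ_j − θ_i) and r_j ≤ 1/(θ_j − θ_i) (so i and j are compatible), and A ⊆ A[i,j] = R(1/(θ_j − θ_i), θ_i). -/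
/-- The antenna set `R(rad, α)`: points within radial reach `rad` and angular
sector `[α, α + 1/rad]`. -/
noncomputable def antennaSet (n : ℕ) (r θ : Fin n → ℝ) (rad α : ℝ) : Finset (Fin n) :=
  Finset.univ.filter (fun j => r j ≤ rad ∧ α ≤ θ j ∧ θ j ≤ α + 1 / rad)

section AntennaSet

variable {n : ℕ} {r θ : Fin n → ℝ} {rad α : ℝ} {i j k : Fin n}

@[simp]
theorem mem_antennaSet :
    k ∈ antennaSet n r θ rad α ↔ r k ≤ rad ∧ α ≤ θ k ∧ θ k ≤ α + 1 / rad := by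
  simp [antennaSet]

theorem mem_antennaSet_one_div_sub :
    k ∈ antennaSet n r θ (1 / (θ j - θ i)) (θ i) ↔
      r k ≤ 1 / (θ j - θ i) ∧ θ i ≤ θ k ∧ θ k ≤ θ j := by
  rw [mem_antennaSet, one_div_one_div, add_sub_cancel]

/-- Two points of `R(rad, α)` lie in a sector of width `1/rad`, so `rad` is at most the
reciprocal of their angular distance. -/
theorem le_one_div_sub_of_mem_antennaSet (hrad : 0 < rad)
    (hi : i ∈ antennaSet n r θ rad α) (hj : j ∈ antennaSet n r θ rad α) (hij : θ i < θ j) :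
    rad ≤ 1 / (θ j - θ i) := by
  rw [mem_antennaSet] at hi hj
  have hwidth : θ j - θ i ≤ 1 / rad := by linarith
  rwa [le_one_div hrad (sub_pos.mpr hij)]

end AntennaSet

theorem antennaSet_subset_canonical_general (n : ℕ) (r θ : Fin n → ℝ)
    (hθ : StrictMono θ)
    (rad α : ℝ) (hrad : 0 < rad)
    (A : Finset (Fin n)) (hA : A = antennaSet n r θ rad α) (hne : A.Nonempty)
    (i j : Fin n) (hi : i = A.min' hne) (hj : j = A.max' hne) (hij : i < j) :
    r i ≤ 1 / (θ j - θ i) ∧ r j ≤ 1 / (θ j - θ i) ∧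
    A ⊆ antennaSet n r θ (1 / (θ j - θ i)) (θ i) := by
  have hiA : i ∈ A := hi ▸ A.min'_mem hne
  have hjA : j ∈ A := hj ▸ A.max'_mem hne
  subst hA
  have hrad_le : rad ≤ 1 / (θ j - θ i) :=
    le_one_div_sub_of_mem_antennaSet hrad hiA hjA (hθ hij)
  refine ⟨((mem_antennaSet.mp hiA).1).trans hrad_le,
    ((mem_antennaSet.mp hjA).1).trans hrad_le, fun k hk => ?_⟩
  rw [mem_antennaSet_one_div_sub]
  exact ⟨((mem_antennaSet.mp hk).1).trans hrad_le,
    hθ.monotone (hi ▸ Finset.min'_le _ k hk), hθ.monotone (hj ▸ Finset.le_max' _ k hk)⟩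

/-- If `A = R(rad, α)` is a nonempty antenna set, `i = min A`, `j = max A` and `i < j`,
then `r_i ≤ 1/(θ_j - θ_i)`, `r_j ≤ 1/(θ_j - θ_i)` (so `i` and `j` are compatible),
and `A ⊆ A[i,j] = R(1/(θ_j - θ_i), θ_i)`. -/
theorem antennaSet_subset_canonical (n : ℕ) (r θ : Fin n → ℝ)
    (hr : ∀ j, 0 < r j) (hθ : StrictMono θ)
    (rad α : ℝ) (hrad : 0 < rad)
    (A : Finset (Fin n)) (hA : A = antennaSet n r θ rad α) (hne : A.Nonempty)
    (i j : Fin n) (hi : i = A.min' hne) (hj : j = A.max' hne) (hij : i < j) :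
    r i ≤ 1 / (θ j - θ i) ∧ r j ≤ 1 / (θ j - θ i) ∧
    A ⊆ antennaSet n r θ (1 / (θ j - θ i)) (θ i) :=
  antennaSet_subset_canonical_general n r θ hθ rad α hrad A hA hne i j hi hj hij
end

section
/- Let S ⊆ {1,…,n} and let P be a finite set of compatible index pairs (k,ℓ) with k ≤ ℓ such that: (i) S ⊆ ⋃_{(k,ℓ)∈P} A[k,ℓ]; (ii) for every (k,ℓ) ∈ P, both k ∈ S and ℓ ∈ S; (iii) for every (k,ℓ) ∈ P, neither k nor ℓ belongs to A[k′,ℓ′] for any pair (k′,ℓ′) ∈ P other than (k,ℓ). Then for any two pairs (k,ℓ), (k′,ℓ′) ∈ P with k < k′, either ℓ < k′ (the index ranges are disjoint and A[k,ℓ] precedes A[k′,ℓ′]) or ℓ′ < ℓ (the index range of A[k′,ℓ′] is nested inside that of A[k,ℓ]). -/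
/-- Indices `i ≤ j` are compatible if `i = j`, or `i < j` and both
`r_i ≤ 1/(θ_j - θ_i)` and `r_j ≤ 1/(θ_j - θ_i)`. -/
def Compatible (n : ℕ) (r θ : Fin n → ℝ) (i j : Fin n) : Prop :=
  i = j ∨ (i < j ∧ r i ≤ 1 / (θ j - θ i) ∧ r j ≤ 1 / (θ j - θ i))

/-- For compatible `i ≤ j`, the canonical antenna set `A[i,j]`. -/
noncomputable def capA (n : ℕ) (r θ : Fin n → ℝ) (i j : Fin n) : Finset (Fin n) :=
  if i = j then {i} else antennaSet n r θ (1 / (θ j - θ i)) (θ i)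

section

variable {n : ℕ} {r θ : Fin n → ℝ}

lemma mem_capA_of_ne {i j k : Fin n} (hij : i ≠ j) (hik : θ i ≤ θ k) (hkj : θ k ≤ θ j)
    (hk : r k ≤ 1 / (θ j - θ i)) : k ∈ capA n r θ i j := by
  simp only [capA, if_neg hij, antennaSet, Finset.mem_filter, Finset.mem_univ, true_and,
    one_div_one_div]
  exact ⟨hk, hik, by linarith⟩

lemma mem_capA_or_mem_capA_of_crossing (hθ : StrictMono θ) {i j k l : Fin n}
    (hij : Compatible n r θ i j) (hkl : Compatible n r θ k l)
    (hik : i < k) (hkj : k ≤ j) (hjl : j ≤ l) :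
    k ∈ capA n r θ i j ∨ j ∈ capA n r θ k l := by
  obtain rfl | ⟨hij, -, hrj⟩ := hij
  · exact absurd hkj hik.not_ge
  obtain rfl | ⟨hkl, hrk, -⟩ := hkl
  · obtain rfl : j = k := le_antisymm hjl hkj
    simp [capA]
  rcases le_total (θ j - θ i) (θ l - θ k) with hspan | hspan
  · refine .inl (mem_capA_of_ne hij.ne (hθ hik).le (hθ.monotone hkj) ?_)
    exact hrk.trans (one_div_le_one_div_of_le (sub_pos.2 (hθ hij)) hspan)
  · refine .inr (mem_capA_of_ne hkl.ne (hθ.monotone hkj) (hθ.monotone hjl) ?_)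
    exact hrj.trans (one_div_le_one_div_of_le (sub_pos.2 (hθ hkl)) hspan)

end

theorem cover_precede_or_nested_general (n : ℕ) (r θ : Fin n → ℝ)
    (hθ : StrictMono θ)
    (P : Finset (Fin n × Fin n))
    (hP : ∀ p ∈ P, p.1 ≤ p.2 ∧ Compatible n r θ p.1 p.2)
    (hfree : ∀ p ∈ P, ∀ q ∈ P, q ≠ p →
      p.1 ∉ capA n r θ q.1 q.2 ∧ p.2 ∉ capA n r θ q.1 q.2) :
    ∀ p ∈ P, ∀ q ∈ P, p.1 < q.1 → p.2 < q.1 ∨ q.2 < p.2 := by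
  intro p hp q hq hlt
  by_contra! hcross
  have hqp : q ≠ p := fun h => hlt.ne' (congrArg Prod.fst h)
  rcases mem_capA_or_mem_capA_of_crossing hθ (hP p hp).2 (hP q hq).2 hlt hcross.1 hcross.2
    with hq₁ | hp₂
  · exact (hfree q hq p hp hqp.symm).1 hq₁
  · exact (hfree p hp q hq hqp).2 hp₂

/-- In a cover of `S` by canonical antenna sets whose endpoints belong to `S`
and are covered only by their own set, any two sets are either disjoint in index range
(one precedes the other) or one index range is nested inside the other. -/
theorem cover_precede_or_nested (n : ℕ) (r θ : Fin n → ℝ)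
    (hr : ∀ j, 0 < r j) (hθ : StrictMono θ)
    (S : Finset (Fin n)) (P : Finset (Fin n × Fin n))
    (hP : ∀ p ∈ P, p.1 ≤ p.2 ∧ Compatible n r θ p.1 p.2)
    (hcover : S ⊆ P.biUnion (fun p => capA n r θ p.1 p.2))
    (hends : ∀ p ∈ P, p.1 ∈ S ∧ p.2 ∈ S)
    (hfree : ∀ p ∈ P, ∀ q ∈ P, q ≠ p →
      p.1 ∉ capA n r θ q.1 q.2 ∧ p.2 ∉ capA n r θ q.1 q.2) :
    ∀ p ∈ P, ∀ q ∈ P, p.1 < q.1 → p.2 < q.1 ∨ q.2 < p.2 :=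
  cover_precede_or_nested_general n r θ hθ P hP hfree
end

section
/- Let Q ⊆ {1,…,n}. If cost(Q) ≤ D, then Σ_{j∈Q} d_j ≤ (1 + ε₀ + ε₁)·D, where ε₁ = (1+ε₀)^{−k}. -/
/-! A large element loses at most a factor `1 + ε₀` when its demand is rounded down to the
next threshold, and every small element except the largest one is counted exactly. Hence the
true demand of `Q` is at most `(1 + ε₀) · cost(Q)` plus the demand of the largest small
element, which is below `t k = ε₁ · D`. -/

open Finset

lemma lt_one_add_mul_next_threshold {D ε x : ℝ} (hε : 1 + ε ≠ 0) {i : ℕ}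
    (hx : x < D / (1 + ε) ^ i) : x < (1 + ε) * (D / (1 + ε) ^ (i + 1)) := by
  rwa [pow_succ, ← div_div, mul_div_cancel₀ _ hε]

lemma dite_max'_le_sum {ι : Type*} [LinearOrder ι] {s : Finset ι} {f : ι → ℝ}
    (hf : ∀ j ∈ s, 0 ≤ f j) :
    (if h : s.Nonempty then f (s.max' h) else 0) ≤ ∑ j ∈ s, f j := by
  split_ifs with h
  · exact single_le_sum hf (s.max'_mem h)
  · exact sum_nonneg hf

lemma dite_max'_le {ι : Type*} [LinearOrder ι] {s : Finset ι} {f : ι → ℝ} {T : ℝ}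
    (hT : 0 ≤ T) (hf : ∀ j ∈ s, f j ≤ T) :
    (if h : s.Nonempty then f (s.max' h) else 0) ≤ T := by
  split_ifs with h
  · exact hf _ (s.max'_mem h)
  · exact hT

theorem decreased_cost_bound_general (n : ℕ) (d : Fin n → ℝ) (D ε₀ : ℝ) (k : ℕ)
    (hD : 0 < D) (hε : 0 < ε₀)
    (hd : ∀ j, 0 ≤ d j ∧ d j < D)
    (t : ℕ → ℝ) (ht : ∀ i, t i = D / (1 + ε₀) ^ i)
    (d' : Fin n → ℝ)
    (hd' : ∀ j, t k ≤ d j → ∃ i, i < k ∧ t (i + 1) ≤ d j ∧ d j < t i ∧ d' j = t (i + 1))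
    (Q : Finset (Fin n)) (cost : ℝ)
    (hcost : cost = (∑ j ∈ Q.filter (fun j => t k ≤ d j), d' j) +
      ((∑ j ∈ Q.filter (fun j => d j < t k), d j) -
        (if h : (Q.filter (fun j => d j < t k)).Nonempty
         then d ((Q.filter (fun j => d j < t k)).max' h) else 0)))
    (hcostD : cost ≤ D) :
    ∑ j ∈ Q, d j ≤ (1 + ε₀ + 1 / (1 + ε₀) ^ k) * D := by
  set L := Q.filter (fun j => t k ≤ d j)
  set S := Q.filter (fun j => d j < t k)
  set r := if h : S.Nonempty then d (S.max' h) else 0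
  have hsplit : ∑ j ∈ Q, d j = ∑ j ∈ L, d j + ∑ j ∈ S, d j := by
    simpa only [not_le] using (sum_filter_add_sum_filter_not Q (fun j => t k ≤ d j) d).symm
  have hlarge : ∑ j ∈ L, d j ≤ (1 + ε₀) * ∑ j ∈ L, d' j := by
    rw [mul_sum]
    refine sum_le_sum fun j hj => ?_
    obtain ⟨i, -, -, hlt, hdec⟩ := hd' j (mem_filter.mp hj).2
    rw [ht] at hlt
    rw [hdec, ht]
    exact (lt_one_add_mul_next_threshold (by positivity) hlt).le
  have hr_sum : r ≤ ∑ j ∈ S, d j := dite_max'_le_sum fun j _ => (hd j).1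
  have hr_tk : r ≤ t k :=
    dite_max'_le (by rw [ht]; positivity) fun j hj => (mem_filter.mp hj).2.le
  have htk : t k = 1 / (1 + ε₀) ^ k * D := by rw [ht]; ring
  -- the remaining small demand `∑ S - r` is nonnegative, so scaling it by `1 + ε₀` only increases it
  calc ∑ j ∈ Q, d j ≤ (1 + ε₀) * cost + t k := by
        rw [hsplit, hcost]; nlinarith
    _ ≤ (1 + ε₀ + 1 / (1 + ε₀) ^ k) * D := by
        rw [htk]; nlinarith

/-- If the decreased cost of `Q` is at most `D`, then the true demand of `Q` is at most
`(1 + ε₀ + ε₁)·D` with `ε₁ = (1+ε₀)^{-k}`.  Here `t i = D(1+ε₀)^{-i}` are the thresholds,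
elements `j` with `d j < t k` are small, the other elements are large, the decreased demand
`d' j` of a large element `j` of class `C_i` (i.e. `t (i+1) ≤ d j < t i`, `i < k`) is
`t (i+1)`, and the decreased cost of `Q` is the sum of `d' j` over large `j ∈ Q` plus the
sum of `d j` over small `j ∈ Q` minus the demand of the largest small element of `Q`
(if there is one). -/
theorem decreased_cost_bound (n : ℕ) (d : Fin n → ℝ) (D ε₀ : ℝ) (k : ℕ)
    (hD : 0 < D) (hε : 0 < ε₀) (hk : 1 ≤ k)
    (hd : ∀ j, 0 ≤ d j ∧ d j < D)
    (t : ℕ → ℝ) (ht : ∀ i, t i = D / (1 + ε₀) ^ i)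
    (d' : Fin n → ℝ)
    (hd' : ∀ j, t k ≤ d j → ∃ i, i < k ∧ t (i + 1) ≤ d j ∧ d j < t i ∧ d' j = t (i + 1))
    (Q : Finset (Fin n)) (cost : ℝ)
    (hcost : cost = (∑ j ∈ Q.filter (fun j => t k ≤ d j), d' j) +
      ((∑ j ∈ Q.filter (fun j => d j < t k), d j) -
        (if h : (Q.filter (fun j => d j < t k)).Nonempty
         then d ((Q.filter (fun j => d j < t k)).max' h) else 0)))
    (hcostD : cost ≤ D) :
    ∑ j ∈ Q, d j ≤ (1 + ε₀ + 1 / (1 + ε₀) ^ k) * D :=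
  decreased_cost_bound_general n d D ε₀ k hD hε hd t ht d' hd' Q cost hcost hcostD
end
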